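/- (Hard Lefschetz, linear algebra version) For every integer i with 0 ≤ i ≤ n, the (n−i)-th power of X_+ restricts to a linear isomorphism from Λ^iW onto Λ^{2n−i}W. -/

import Mathlib

/- Concrete model of the exterior algebra Λ^•(W) for W = ℂ^{2n}:
   an element is a coordinate function on the basis {χ_S}, S ⊆ {1,…,2n}. -/

open scoped Classical
open Matrix

noncomputable section

/-- Model of Λ^•(ℂ^N): coordinates with respect to the basis of wedge monomials. -/
abbrev Fock (N : ℕ) := Finset (Fin N) → ℂ

/-- The Koszul sign (−1)^{#{j ∈ S : j < i}}. -/
def sgn {N : ℕ} (i : Fin N) (S : Finset (Fin N)) : ℂ :=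
  (-1) ^ (S.filter (fun j => j < i)).card

/-- Generic "matrix-element" operator used to define creation/annihilation. -/
def fockOp {N : ℕ} (c : Finset (Fin N) → ℂ) (g : Finset (Fin N) → Finset (Fin N)) :
    Module.End ℂ (Fock N) where
  toFun f := fun S => c S * f (g S)
  map_add' f₁ f₂ := by funext S; simp [Pi.add_apply, mul_add]
  map_smul' r f := by funext S; simp [Pi.smul_apply, smul_eq_mul]; ring

/-- Left exterior multiplication by the basis vector indexed by `i`. -/
def wedgeOp {N : ℕ} (i : Fin N) : Module.End ℂ (Fock N) :=
  fockOp (fun S => if i ∈ S then sgn i S else 0) (fun S => S.erase i)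

/-- Contraction (interior product) by the dual basis vector indexed by `i`. -/
def contrOp {N : ℕ} (i : Fin N) : Module.End ℂ (Fock N) :=
  fockOp (fun S => if i ∈ S then 0 else sgn i S) (fun S => insert i S)

/-- The homogeneous component Λ^i(ℂ^N). -/
def degSub (N i : ℕ) : Submodule ℂ (Fock N) where
  carrier := {f | ∀ S : Finset (Fin N), S.card ≠ i → f S = 0}
  add_mem' := by intro f g hf hg S hS; simp [Pi.add_apply, hf S hS, hg S hS]
  zero_mem' := by intro S hS; rfl
  smul_mem' := by intro c f hf S hS; simp [Pi.smul_apply, hf S hS]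

/-- Index of the basis vector e_i of W = ℂ^{2n}. -/
def eIdx (n : ℕ) (i : Fin n) : Fin (2*n) := ⟨i.val, by have := i.isLt; omega⟩

/-- Index of the basis vector f_i of W = ℂ^{2n}. -/
def fIdx (n : ℕ) (i : Fin n) : Fin (2*n) := ⟨n + i.val, by have := i.isLt; omega⟩

/-- X₊ : left multiplication by ω̂ = Σ e_i ∧ f_i. -/
def Xplus (n : ℕ) : Module.End ℂ (Fock (2*n)) :=
  ∑ i : Fin n, wedgeOp (eIdx n i) * wedgeOp (fIdx n i)

/-- X₋ = Σ ι_{e_i^*} ∘ ι_{f_i^*}. -/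
def Xminus (n : ℕ) : Module.End ℂ (Fock (2*n)) :=
  ∑ i : Fin n, contrOp (eIdx n i) * contrOp (fIdx n i)

/-- The Gram matrix of the standard symplectic form ω on ℂ^{2n}:
    ω(e_i, f_j) = δ_{ij}, ω(e_i,e_j) = ω(f_i,f_j) = 0. -/
def sympJ (n : ℕ) : Matrix (Fin (2*n)) (Fin (2*n)) ℂ :=
  Matrix.of fun a b => if a.val + n = b.val then 1 else if b.val + n = a.val then -1 else 0

/-- The derivation action of a matrix A on Λ^•(ℂ^N):
    A·(v₁∧⋯∧v_p) = Σ_j v₁∧⋯∧Av_j∧⋯∧v_p, i.e. Σ_{i,j} A_{ij} a_i a_j^*. -/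
def derAct {N : ℕ} (A : Matrix (Fin N) (Fin N) ℂ) : Module.End ℂ (Fock N) :=
  ∑ i : Fin N, ∑ j : Fin N, A i j • (wedgeOp i * contrOp j)

/-- The space of primitive i-forms P^i = Λ^i W ∩ ker X₋. -/
def Pprim (n i : ℕ) : Submodule ℂ (Fock (2*n)) :=
  degSub (2*n) i ⊓ LinearMap.ker (Xminus n)

/-!
The operators `X₊`, `X₋` and the number operator minus `n` form an `sl₂`-triple: the canonical
anticommutation relations between wedge and contraction operators give `[X₋, X₊] = i - n` on
`Λ^i W`. For a primitive `f ∈ Λ^i W` (`X₋ f = 0`) this yields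
`X₋^k X₊^k f = ∏_{t<k} (t+1)(i+t-n) • f`, a nonzero multiple of `f` for `k ≤ n - i`.
Injectivity of `X₊^(n-i)` on `Λ^i W` follows by induction on `i`: if `X₊^(n-i) f = 0` then
`X₊^(n-i+2)` kills `X₋ f ∈ Λ^(i-2) W`, so `f` is primitive. Surjectivity is a dimension count,
`S ↦ Sᶜ` identifying `Λ^i W` with `Λ^(2n-i) W`.
-/

section Sl2

variable {K M : Type*} [Field K] [AddCommGroup M] [Module K M]
  {E F : Module.End K M} {grade : ℕ → Submodule K M} {n : ℕ}

theorem raise_pow_apply_mem (hE : ∀ i, ∀ f ∈ grade i, E f ∈ grade (i + 2)) {i : ℕ} {f : M}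
    (hf : f ∈ grade i) (k : ℕ) : (E ^ k) f ∈ grade (i + 2 * k) := by
  induction k with
  | zero => simpa using hf
  | succ k ih => simpa [pow_succ', mul_add, ← add_assoc] using hE _ _ ih

theorem lower_raise_pow_succ_apply (hE : ∀ i, ∀ f ∈ grade i, E f ∈ grade (i + 2))
    (hFE : ∀ i, ∀ f ∈ grade i, F (E f) - E (F f) = ((i : K) - n) • f)
    {i : ℕ} {f : M} (hf : f ∈ grade i) (k : ℕ) :
    F ((E ^ (k + 1)) f) =
      (E ^ (k + 1)) (F f) + ((k + 1 : K) * ((i + k : K) - n)) • (E ^ k) f := by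
  induction k with
  | zero => simpa [sub_eq_iff_eq_add'] using hFE i f hf
  | succ k ih =>
    have hstep := sub_eq_iff_eq_add'.mp (hFE _ _ (raise_pow_apply_mem hE hf (k + 1)))
    simp only [pow_succ' E, Module.End.mul_apply] at hstep ih ⊢
    rw [hstep, ih, map_add, map_smul, add_assoc, ← add_smul]
    congr 2
    push_cast
    ring

theorem lower_pow_raise_pow_apply_of_lower_eq_zero
    (hE : ∀ i, ∀ f ∈ grade i, E f ∈ grade (i + 2))
    (hFE : ∀ i, ∀ f ∈ grade i, F (E f) - E (F f) = ((i : K) - n) • f)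
    {i : ℕ} {f : M} (hf : f ∈ grade i) (hFf : F f = 0) (k : ℕ) :
    (F ^ k) ((E ^ k) f) = (∏ t ∈ Finset.range k, ((t + 1 : K) * ((i + t : K) - n))) • f := by
  induction k with
  | zero => simp
  | succ k ih =>
    rw [pow_succ F, Module.End.mul_apply, lower_raise_pow_succ_apply hE hFE hf, hFf, map_zero,
      zero_add, map_smul, ih, smul_smul, Finset.prod_range_succ, mul_comm]

theorem eq_zero_of_raise_pow_eq_zero [CharZero K]
    (hE : ∀ i, ∀ f ∈ grade i, E f ∈ grade (i + 2))
    (hF : ∀ i, ∀ f ∈ grade (i + 2), F f ∈ grade i)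
    (hF₀ : ∀ i < 2, ∀ f ∈ grade i, F f = 0)
    (hFE : ∀ i, ∀ f ∈ grade i, F (E f) - E (F f) = ((i : K) - n) • f)
    {i : ℕ} (hi : i ≤ n) {f : M} (hf : f ∈ grade i) (hEf : (E ^ (n - i)) f = 0) : f = 0 := by
  induction i using Nat.strong_induction_on generalizing f with
  | _ i ih =>
  have hFf : F f = 0 := by
    rcases Nat.lt_or_ge i 2 with hi2 | hi2
    · exact hF₀ i hi2 f hf
    obtain ⟨j, rfl⟩ := Nat.exists_eq_add_of_le' hi2
    refine ih j (by omega) (by omega) (hF j f hf) ?_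
    have hkill : ∀ m, n - (j + 2) ≤ m → (E ^ m) f = 0 := fun m hm => by
      rw [← Nat.sub_add_cancel hm, pow_add, Module.End.mul_apply, hEf, map_zero]
    have := lower_raise_pow_succ_apply hE hFE hf (n - (j + 2) + 1)
    rwa [hkill _ (by omega), hkill _ (by omega), map_zero, smul_zero, add_zero, eq_comm,
      show n - (j + 2) + 1 + 1 = n - j by omega] at this
  have hscalar := lower_pow_raise_pow_apply_of_lower_eq_zero hE hFE hf hFf (n - i)
  rw [hEf, map_zero, eq_comm, smul_eq_zero] at hscalar
  refine hscalar.resolve_left (Finset.prod_ne_zero_iff.2 fun t ht => mul_ne_zero ?_ ?_)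
  · exact_mod_cast t.succ_ne_zero
  · have := Finset.mem_range.1 ht
    exact sub_ne_zero.2 (by exact_mod_cast (by omega : i + t ≠ n))

end Sl2

theorem Submodule.map_eq_of_injOn_of_finrank_le {K V W : Type*} [Field K] [AddCommGroup V]
    [Module K V] [AddCommGroup W] [Module K W] [FiniteDimensional K W] {φ : V →ₗ[K] W}
    {p : Submodule K V} {q : Submodule K W} (hpq : p.map φ ≤ q)
    (hφ : ∀ x ∈ p, φ x = 0 → x = 0) (hrank : Module.finrank K q ≤ Module.finrank K p) :
    p.map φ = q := by
  have hinj : Function.Injective (φ ∘ₗ p.subtype) :=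
    LinearMap.ker_eq_bot.1 (LinearMap.ker_eq_bot'.2 fun x hx => Subtype.ext (hφ x x.2 hx))
  refine Submodule.eq_of_le_of_finrank_le hpq (hrank.trans_eq ?_)
  rw [← LinearMap.finrank_range_of_inj hinj, LinearMap.range_comp, Submodule.range_subtype]

section Anticommute

variable {R : Type*} [Ring R] {a b c d : R}

theorem commute_mul_of_anticomm (hca : c * a = -(a * c)) (hda : d * a = -(a * d)) :
    Commute (c * d) a :=
  calc c * d * a = -(c * a * d) := by rw [mul_assoc, hda]; noncomm_ring
    _ = a * (c * d) := by rw [hca]; noncomm_ring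

theorem mul_mul_sub_mul_mul_of_anticomm (hac : a * c + c * a = 1) (hbd : b * d + d * b = 1)
    (hcb : c * b = -(b * c)) (hda : d * a = -(a * d)) :
    c * d * (a * b) - a * b * (c * d) = a * c + b * d - 1 := by
  have hca : c * a = 1 - a * c := eq_sub_of_add_eq' hac
  have hdb : d * b = 1 - b * d := eq_sub_of_add_eq' hbd
  have h₁ : c * d * (a * b) = -((1 - a * c) * (1 - b * d)) :=
    calc c * d * (a * b) = c * (d * a) * b := by noncomm_ring
      _ = -((c * a) * (d * b)) := by rw [hda]; noncomm_ring
      _ = -((1 - a * c) * (1 - b * d)) := by rw [hca, hdb]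
  have h₂ : a * b * (c * d) = -((a * c) * (b * d)) :=
    calc a * b * (c * d) = a * -(c * b) * d := by rw [neg_eq_iff_eq_neg.mpr hcb]; noncomm_ring
      _ = -((a * c) * (b * d)) := by noncomm_ring
  rw [h₁, h₂]
  noncomm_ring

end Anticommute

def numberOp (N : ℕ) : Module.End ℂ (Fock N) :=
  ∑ a, wedgeOp a * contrOp a

section Fock

variable {N i : ℕ} {f : Fock N}

theorem fockOp_apply (c : Finset (Fin N) → ℂ) (g : Finset (Fin N) → Finset (Fin N))
    (S : Finset (Fin N)) : fockOp c g f S = c S * f (g S) := rfl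

theorem sgn_erase_self (a : Fin N) (S : Finset (Fin N)) : sgn a (S.erase a) = sgn a S := by
  rw [sgn, sgn, Finset.filter_erase, Finset.erase_eq_of_notMem (by simp)]

theorem sgn_insert_self (a : Fin N) (S : Finset (Fin N)) : sgn a (insert a S) = sgn a S := by
  rw [← sgn_erase_self, Finset.erase_insert_eq_erase, sgn_erase_self]

theorem sgn_mul_self (a : Fin N) (S : Finset (Fin N)) : sgn a S * sgn a S = 1 := by
  rw [sgn, ← mul_pow]
  norm_num

theorem sgn_erase_of_mem {a b : Fin N} {S : Finset (Fin N)} (hb : b ∈ S) :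
    sgn a (S.erase b) = (if b < a then -1 else 1) * sgn a S := by
  rw [sgn, sgn, Finset.filter_erase]
  by_cases hba : b < a
  · have hmem : b ∈ S.filter (· < a) := Finset.mem_filter.2 ⟨hb, hba⟩
    rw [if_pos hba, ← Finset.card_erase_add_one hmem, pow_succ]
    ring
  · rw [Finset.erase_eq_of_notMem (by simp [hba]), if_neg hba, one_mul]

theorem sgn_insert_of_notMem {a b : Fin N} {S : Finset (Fin N)} (hb : b ∉ S) :
    sgn a (insert b S) = (if b < a then -1 else 1) * sgn a S := by
  have := sgn_erase_of_mem (a := a) (Finset.mem_insert_self b S)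
  rw [Finset.erase_insert hb] at this
  rw [this]
  split_ifs <;> ring

theorem contrOp_mul_wedgeOp_of_ne {a b : Fin N} (h : a ≠ b) :
    contrOp b * wedgeOp a = -(wedgeOp a * contrOp b) := by
  refine LinearMap.ext fun g => funext fun S => ?_
  simp only [Module.End.mul_apply, LinearMap.neg_apply, Pi.neg_apply, wedgeOp, contrOp,
    fockOp_apply]
  by_cases ha : a ∈ S <;> by_cases hb : b ∈ S <;>
    simp [Finset.mem_insert, Finset.mem_erase, ha, hb, h, h.symm]
  rw [Finset.erase_insert_of_ne h.symm, sgn_insert_of_notMem hb, sgn_erase_of_mem ha]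
  rcases h.lt_or_gt with hlt | hgt
  · simp [hlt, not_lt.2 hlt.le]; ring
  · simp [hgt, not_lt.2 hgt.le]; ring

theorem wedgeOp_mul_contrOp_add_contrOp_mul_wedgeOp (a : Fin N) :
    wedgeOp a * contrOp a + contrOp a * wedgeOp a = 1 := by
  refine LinearMap.ext fun g => funext fun S => ?_
  simp only [LinearMap.add_apply, Module.End.mul_apply, Module.End.one_apply, Pi.add_apply,
    wedgeOp, contrOp, fockOp_apply]
  by_cases ha : a ∈ S
  · simp [ha, Finset.insert_erase ha, sgn_erase_self, ← mul_assoc, sgn_mul_self]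
  · simp [ha, Finset.erase_insert ha, sgn_insert_self, ← mul_assoc, sgn_mul_self]

theorem wedgeOp_mul_contrOp_self_apply (a : Fin N) (S : Finset (Fin N)) :
    (wedgeOp a * contrOp a) f S = if a ∈ S then f S else 0 := by
  simp only [Module.End.mul_apply, wedgeOp, contrOp, fockOp_apply]
  by_cases ha : a ∈ S
  · simp [ha, Finset.insert_erase ha, sgn_erase_self, ← mul_assoc, sgn_mul_self]
  · simp [ha]

theorem numberOp_apply (S : Finset (Fin N)) : numberOp N f S = S.card * f S := by
  simp only [numberOp, LinearMap.sum_apply, Finset.sum_apply, wedgeOp_mul_contrOp_self_apply]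
  rw [Finset.sum_ite_mem, Finset.univ_inter, Finset.sum_const, nsmul_eq_mul]

theorem numberOp_apply_of_mem_degSub (hf : f ∈ degSub N i) : numberOp N f = (i : ℂ) • f := by
  funext S
  rw [numberOp_apply, Pi.smul_apply, smul_eq_mul]
  by_cases hS : S.card = i
  · rw [hS]
  · rw [hf S hS, mul_zero, mul_zero]

theorem wedgeOp_mem_degSub (a : Fin N) (hf : f ∈ degSub N i) :
    wedgeOp a f ∈ degSub N (i + 1) := by
  intro S hS
  simp only [wedgeOp, fockOp_apply]
  split_ifs with ha
  · have := Finset.card_pos.2 ⟨a, ha⟩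
    rw [hf _ (by rw [Finset.card_erase_of_mem ha]; omega), mul_zero]
  · rw [zero_mul]

theorem contrOp_mem_degSub (a : Fin N) (hf : f ∈ degSub N (i + 1)) :
    contrOp a f ∈ degSub N i := by
  intro S hS
  simp only [contrOp, fockOp_apply]
  split_ifs with ha
  · rw [zero_mul]
  · rw [hf _ (by rw [Finset.card_insert_of_notMem ha]; omega), mul_zero]

theorem contrOp_eq_zero_of_mem_degSub_zero (a : Fin N) (hf : f ∈ degSub N 0) :
    contrOp a f = 0 := by
  funext S
  simp only [contrOp, fockOp_apply]
  rw [hf _ (Finset.card_ne_zero.2 (Finset.insert_nonempty a S)), mul_zero]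
  rfl

theorem compl_mem_degSub {j : ℕ} (hij : i + j = N) (hf : f ∈ degSub N i) :
    (fun S => f Sᶜ) ∈ degSub N j := by
  intro S hS
  have := Finset.card_le_univ S
  rw [Fintype.card_fin] at this
  exact hf _ (by rw [Finset.card_compl, Fintype.card_fin]; omega)

def degSubComplEquiv {j : ℕ} (hij : i + j = N) : degSub N i ≃ₗ[ℂ] degSub N j where
  toFun f := ⟨fun S => f.1 Sᶜ, compl_mem_degSub hij f.2⟩
  map_add' _ _ := rfl
  map_smul' _ _ := rfl
  invFun g := ⟨fun S => g.1 Sᶜ, compl_mem_degSub (by omega) g.2⟩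
  left_inv f := Subtype.ext (funext fun S => by simp)
  right_inv g := Subtype.ext (funext fun S => by simp)

end Fock

section Symplectic

variable {n i : ℕ} {f : Fock (2 * n)}

theorem eIdx_injective (n : ℕ) : Function.Injective (eIdx n) := fun j k h => by
  simpa [eIdx, Fin.ext_iff] using h

theorem fIdx_injective (n : ℕ) : Function.Injective (fIdx n) := fun j k h => by
  simpa [fIdx, Fin.ext_iff] using h

theorem eIdx_ne_fIdx (j k : Fin n) : eIdx n j ≠ fIdx n k := by
  simp only [eIdx, fIdx, Ne, Fin.ext_iff]
  omega

theorem sum_univ_eq_sum_eIdx_add_fIdx {M : Type*} [AddCommMonoid M] (g : Fin (2 * n) → M) :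
    ∑ a, g a = ∑ j, (g (eIdx n j) + g (fIdx n j)) := by
  rw [← (finCongr (two_mul n)).symm.sum_comp, Fin.sum_univ_add, ← Finset.sum_add_distrib]
  rfl

theorem Xminus_mul_Xplus_sub (n : ℕ) :
    Xminus n * Xplus n - Xplus n * Xminus n = numberOp (2 * n) - n := by
  have hterm : ∀ j k : Fin n,
      contrOp (eIdx n j) * contrOp (fIdx n j) * (wedgeOp (eIdx n k) * wedgeOp (fIdx n k)) -
        wedgeOp (eIdx n k) * wedgeOp (fIdx n k) * (contrOp (eIdx n j) * contrOp (fIdx n j)) =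
      if j = k then
        wedgeOp (eIdx n j) * contrOp (eIdx n j) + wedgeOp (fIdx n j) * contrOp (fIdx n j) - 1
      else 0 := by
    intro j k
    split_ifs with hjk
    · subst hjk
      exact mul_mul_sub_mul_mul_of_anticomm (wedgeOp_mul_contrOp_add_contrOp_mul_wedgeOp _)
        (wedgeOp_mul_contrOp_add_contrOp_mul_wedgeOp _)
        (contrOp_mul_wedgeOp_of_ne (eIdx_ne_fIdx j j).symm)
        (contrOp_mul_wedgeOp_of_ne (eIdx_ne_fIdx j j))
    · have hne := Ne.symm hjk
      refine sub_eq_zero.2 (Commute.mul_right ?_ ?_).eq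
      · exact commute_mul_of_anticomm (contrOp_mul_wedgeOp_of_ne ((eIdx_injective n).ne hne))
          (contrOp_mul_wedgeOp_of_ne (eIdx_ne_fIdx k j))
      · exact commute_mul_of_anticomm (contrOp_mul_wedgeOp_of_ne (eIdx_ne_fIdx j k).symm)
          (contrOp_mul_wedgeOp_of_ne ((fIdx_injective n).ne hne))
  rw [Xminus, Xplus, Finset.sum_mul_sum, Finset.sum_mul_sum, Finset.sum_comm (s := Finset.univ),
    ← Finset.sum_sub_distrib]
  simp only [← Finset.sum_sub_distrib, hterm, Finset.sum_ite_eq', Finset.mem_univ, if_true]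
  rw [Finset.sum_sub_distrib, numberOp, sum_univ_eq_sum_eIdx_add_fIdx, Finset.sum_const,
    Finset.card_univ, Fintype.card_fin, nsmul_one]

theorem Xminus_Xplus_sub_apply (hf : f ∈ degSub (2 * n) i) :
    Xminus n (Xplus n f) - Xplus n (Xminus n f) = ((i : ℂ) - n) • f := by
  have := LinearMap.congr_fun (Xminus_mul_Xplus_sub n) f
  rwa [LinearMap.sub_apply, LinearMap.sub_apply, Module.End.mul_apply, Module.End.mul_apply,
    Module.End.natCast_apply, numberOp_apply_of_mem_degSub hf, ← Nat.cast_smul_eq_nsmul ℂ,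
    ← sub_smul] at this

theorem Xplus_mem_degSub (hf : f ∈ degSub (2 * n) i) : Xplus n f ∈ degSub (2 * n) (i + 2) := by
  simp only [Xplus, LinearMap.sum_apply, Module.End.mul_apply]
  exact Submodule.sum_mem _ fun j _ => wedgeOp_mem_degSub _ (wedgeOp_mem_degSub _ hf)

theorem Xminus_mem_degSub (hf : f ∈ degSub (2 * n) (i + 2)) :
    Xminus n f ∈ degSub (2 * n) i := by
  simp only [Xminus, LinearMap.sum_apply, Module.End.mul_apply]
  exact Submodule.sum_mem _ fun j _ => contrOp_mem_degSub _ (contrOp_mem_degSub _ hf)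

theorem Xminus_eq_zero_of_lt_two (hi : i < 2) (hf : f ∈ degSub (2 * n) i) : Xminus n f = 0 := by
  simp only [Xminus, LinearMap.sum_apply, Module.End.mul_apply]
  refine Finset.sum_eq_zero fun j _ => ?_
  interval_cases i
  · rw [contrOp_eq_zero_of_mem_degSub_zero _ hf, map_zero]
  · rw [contrOp_eq_zero_of_mem_degSub_zero _ (contrOp_mem_degSub _ hf)]

end Symplectic

/-- hard Lefschetz, linear algebra version: for 0 ≤ i ≤ n, the
(n−i)-th power of X₊ restricts to a linear isomorphism Λ^iW ≃ Λ^{2n−i}W, i.e. it maps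
Λ^iW onto Λ^{2n−i}W and is injective on Λ^iW. -/
theorem statement_16 (n i : ℕ) (hi : i ≤ n) :
    Submodule.map ((Xplus n) ^ (n - i)) (degSub (2*n) i) = degSub (2*n) (2*n - i) ∧
    ∀ f ∈ degSub (2*n) i, ((Xplus n) ^ (n - i)) f = 0 → f = 0 := by
  have hE : ∀ i, ∀ f ∈ degSub (2 * n) i, Xplus n f ∈ degSub (2 * n) (i + 2) :=
    fun _ _ => Xplus_mem_degSub
  have hinj : ∀ f ∈ degSub (2*n) i, ((Xplus n) ^ (n - i)) f = 0 → f = 0 := fun f hf =>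
    eq_zero_of_raise_pow_eq_zero hE (fun _ _ => Xminus_mem_degSub)
      (fun _ h2 _ => Xminus_eq_zero_of_lt_two h2) (fun _ _ => Xminus_Xplus_sub_apply) hi hf
  refine ⟨Submodule.map_eq_of_injOn_of_finrank_le ?_ hinj ?_, hinj⟩
  · rintro _ ⟨f, hf, rfl⟩
    simpa [show i + 2 * (n - i) = 2 * n - i by omega] using raise_pow_apply_mem hE hf (n - i)
  · exact (LinearEquiv.finrank_eq (degSubComplEquiv (by omega : 2 * n - i + i = 2 * n))).le
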